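/- arXiv:1810.00876 — 2 statements merged into one kernel-verified Lean document; each statement's English description precedes it below -/
import Mathlib

section
/- Every chordal graph on at least one vertex has a simplicial vertex, i.e., a vertex x such that its neighborhood N(x) induces a clique. -/
/-- A graph is chordal if every cycle of length at least 4 has a chord:
an edge of `G` joining two vertices of the cycle that is not an edge of the cycle
(hence joins two non-consecutive vertices of the cycle). -/
def SimpleGraph.IsChordal {V : Type*} (G : SimpleGraph V) : Prop :=
  ∀ ⦃v : V⦄ (w : G.Walk v v), w.IsCycle → 4 ≤ w.length →
    ∃ x y, x ∈ w.support ∧ y ∈ w.support ∧ G.Adj x y ∧ ¬ w.toSubgraph.Adj x y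

/-!
Dirac's argument. Call a vertex simplicial in `s` if its neighbours in `s` form a clique; by
induction on `s` we show that `s` is a clique or has two non-adjacent vertices simplicial in `s`.
If `a, b ∈ s` are not adjacent, let `C` be the component of `b` in `s` minus the closed
neighbourhood of `a`. The vertices of `s \ C` with a neighbour in `C` are neighbours of `a`, and
they form a clique: two non-adjacent ones, joined through `C` by a shortest (hence chordless)
path, would close up with `a` into a chordless cycle of length at least 4. Applying the induction
hypothesis to `C` and to the rest of `s`, each together with its boundary, gives on each side a
simplicial vertex off the boundary (two non-adjacent candidates cannot both lie in a clique), and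
such a vertex is simplicial in all of `s`.
-/

namespace SimpleGraph.Walk

variable {V : Type*} {G : SimpleGraph V} {x y : V}

theorem exists_length_lt_of_adj_getVert (p : G.Walk x y) {i j : ℕ} (hij : i + 1 < j)
    (hj : j ≤ p.length) (hadj : G.Adj (p.getVert i) (p.getVert j)) :
    ∃ q : G.Walk x y, q.length < p.length ∧ q.support ⊆ p.support := by
  refine ⟨(p.take i).append (cons hadj (p.drop j)), ?_, ?_⟩
  · simp only [length_append, take_length, length_cons, drop_length]
    omega
  · intro z hz
    simp only [support_append, support_cons, support_take, drop_support_eq_support_drop_min,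
      List.tail_cons, List.mem_append] at hz
    exact hz.elim List.mem_of_mem_take List.mem_of_mem_drop

theorem exists_length_lt_of_not_isChordless {p : G.Walk x y} (hp : ¬ p.IsChordless) :
    ∃ q : G.Walk x y, q.length < p.length ∧ q.support ⊆ p.support := by
  simp only [isChordless_iff_forall_mem_edges, not_forall] at hp
  obtain ⟨u, v, hu, hv, huv, hnot⟩ := hp
  obtain ⟨i, rfl, hi⟩ := mem_support_iff_exists_getVert.mp hu
  obtain ⟨j, rfl, hj⟩ := mem_support_iff_exists_getVert.mp hv
  clear hu hv
  wlog hij : i < j generalizing i j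
  · have hji : j < i := lt_of_le_of_ne (not_lt.mp hij) fun h => huv.ne (h ▸ rfl)
    exact this j hj i hi huv.symm (Sym2.eq_swap ▸ hnot) hji
  refine p.exists_length_lt_of_adj_getVert (lt_of_le_of_ne hij fun h => hnot ?_) hj huv
  exact (p.mk_mem_edges_iff_exists).mpr ⟨i, by omega, h ▸ rfl⟩

theorem exists_isPath_isChordless_support_subset [DecidableEq V] (p : G.Walk x y) :
    ∃ q : G.Walk x y, q.IsPath ∧ q.IsChordless ∧ q.support ⊆ p.support := by
  obtain ⟨q, ⟨hq, hqp⟩, hmin⟩ := (measure (length : G.Walk x y → ℕ)).wf.has_min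
    {q | q.IsPath ∧ q.support ⊆ p.support} ⟨_, p.bypass_isPath, p.support_bypass_subset_support⟩
  refine ⟨q, hq, by_contra fun hch => ?_, hqp⟩
  obtain ⟨r, hrq, hr⟩ := exists_length_lt_of_not_isChordless hch
  have hr' := List.Subset.trans (List.Subset.trans r.support_bypass_subset_support hr) hqp
  exact hmin r.bypass ⟨r.bypass_isPath, hr'⟩ (r.length_bypass_le_length.trans_lt hrq)

variable {a : V} {q : G.Walk x y}

theorem IsPath.isCycle_cons_concat (hq : q.IsPath) (ha : a ∉ q.support) (hxy : x ≠ y)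
    (hax : G.Adj a x) (hya : G.Adj y a) : (cons hax (q.concat hya)).IsCycle := by
  rw [cons_isCycle_iff, edges_concat]
  refine ⟨hq.concat ha hya, fun h => ?_⟩
  rw [List.concat_eq_append, List.mem_append] at h
  rcases h with h | h
  · exact ha (q.fst_mem_support_of_mem_edges h)
  · grind

theorem IsChordless.cons_concat (hq : q.IsChordless) (hax : G.Adj a x) (hya : G.Adj y a)
    (hnbr : ∀ z ∈ q.support, G.Adj a z → z = x ∨ z = y) :
    (cons hax (q.concat hya)).IsChordless := by
  have hsupp : ∀ {u}, u ∈ (cons hax (q.concat hya)).support → u = a ∨ u ∈ q.support := by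
    simp only [support_cons, support_concat, List.mem_cons, List.mem_append, List.not_mem_nil]
    tauto
  have hedges : ∀ {u}, u ∈ q.support → G.Adj a u →
      s(a, u) ∈ (cons hax (q.concat hya)).edges := by
    intro u hu hau
    simp only [edges_cons, edges_concat, List.concat_eq_append, List.mem_cons, List.mem_append]
    rcases hnbr u hu hau with rfl | rfl
    · exact .inl rfl
    · exact .inr (.inr (.inl Sym2.eq_swap))
  rw [isChordless_iff_forall_mem_edges]
  intro u v hu hv huv
  rcases hsupp hu with rfl | hu' <;> rcases hsupp hv with rfl | hv'
  · exact (huv.ne rfl).elim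
  · exact hedges hv' huv
  · exact Sym2.eq_swap ▸ hedges hu' huv.symm
  · simp only [edges_cons, edges_concat, List.concat_eq_append, List.mem_cons, List.mem_append]
    exact .inr (.inl (hq.mem_edges hu' hv' huv))

end SimpleGraph.Walk

namespace SimpleGraph

variable {V : Type*} {G : SimpleGraph V} {a x y : V}

theorem IsChordal.adj_of_walk_avoiding_neighborSet (hG : G.IsChordal) (hax : G.Adj a x)
    (hay : G.Adj a y) (hxy : x ≠ y) (p : G.Walk x y) (ha : a ∉ p.support)
    (hnbr : ∀ z ∈ p.support, G.Adj a z → z = x ∨ z = y) : G.Adj x y := by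
  classical
  by_contra hnxy
  obtain ⟨q, hq, hqc, hqp⟩ := p.exists_isPath_isChordless_support_subset
  have hlen : 2 ≤ q.length := by
    by_contra!
    interval_cases h : q.length
    · exact hxy (Walk.eq_of_length_eq_zero h)
    · exact hnxy (Walk.adj_of_length_eq_one h)
  obtain ⟨u, v, hu, hv, huv, hn⟩ :=
    hG _ (hq.isCycle_cons_concat (fun h => ha (hqp h)) hxy hax hay.symm)
      (by rw [Walk.length_cons, Walk.length_concat]; omega)
  exact hn (Walk.adj_toSubgraph_iff_mem_edges.mpr
    ((hqc.cons_concat hax hay.symm fun z hz => hnbr z (hqp hz)).mem_edges hu hv huv))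

variable (G) in
def componentIn (t : Set V) (b : V) : Set V :=
  {v | ∃ p : G.Walk b v, ∀ z ∈ p.support, z ∈ t}

section componentIn

variable {t : Set V} {b c c' : V}

theorem mem_componentIn_self (hb : b ∈ t) : b ∈ G.componentIn t b :=
  ⟨.nil, fun _ hz => Walk.mem_support_nil_iff.mp hz ▸ hb⟩

theorem componentIn_subset : G.componentIn t b ⊆ t :=
  fun _ ⟨p, hp⟩ => hp _ p.end_mem_support

theorem mem_componentIn_of_adj (hc : c ∈ G.componentIn t b) (hc' : c' ∈ t) (hadj : G.Adj c c') :
    c' ∈ G.componentIn t b := by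
  obtain ⟨p, hp⟩ := hc
  refine ⟨p.concat hadj, fun z hz => ?_⟩
  rw [Walk.support_concat, List.mem_append, List.mem_singleton] at hz
  exact hz.elim (hp z) (· ▸ hc')

theorem exists_walk_of_mem_componentIn (hc : c ∈ G.componentIn t b)
    (hc' : c' ∈ G.componentIn t b) : ∃ p : G.Walk c c', ∀ z ∈ p.support, z ∈ t := by
  obtain ⟨p, hp⟩ := hc
  obtain ⟨p', hp'⟩ := hc'
  refine ⟨p.reverse.append p', fun z hz => ?_⟩
  rw [Walk.mem_support_append_iff, Walk.support_reverse, List.mem_reverse] at hz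
  exact hz.elim (hp z) (hp' z)

end componentIn

theorem IsChordal.isClique_setOf_adj_componentIn (hG : G.IsChordal) {t : Set V} {b : V}
    (ht : ∀ z ∈ t, z ≠ a ∧ ¬ G.Adj a z) :
    G.IsClique {x | G.Adj a x ∧ ∃ c ∈ G.componentIn t b, G.Adj x c} := by
  rintro x ⟨hax, cx, hcx, hxcx⟩ y ⟨hay, cy, hcy, hycy⟩ hxy
  obtain ⟨w, hw⟩ := exists_walk_of_mem_componentIn hcx hcy
  set p : G.Walk x y := .cons hxcx (w.concat hycy.symm)
  have hsupp : ∀ z ∈ p.support, z = x ∨ z = y ∨ z ∈ t := by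
    simp only [p, Walk.support_cons, Walk.support_concat, List.mem_cons, List.mem_append,
      List.not_mem_nil]
    grind
  refine hG.adj_of_walk_avoiding_neighborSet hax hay hxy p (fun ha => ?_) fun z hz haz => ?_
  · rcases hsupp a ha with rfl | rfl | ha
    · exact hax.ne rfl
    · exact hay.ne rfl
    · exact (ht a ha).1 rfl
  · rcases hsupp z hz with rfl | rfl | hz
    · exact .inl rfl
    · exact .inr rfl
    · exact ((ht z hz).2 haz).elim

variable (G) in
def boundary (s X : Set V) : Set V :=
  {v ∈ s \ X | ∃ c ∈ X, G.Adj v c}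

variable (G) in
def IsSimplicialIn (s : Set V) (x : V) : Prop :=
  G.IsClique (G.neighborSet x ∩ s)

variable (G) in
def HasSimplicialPair (s : Set V) : Prop :=
  ∃ u ∈ s, ∃ v ∈ s, u ≠ v ∧ ¬ G.Adj u v ∧ G.IsSimplicialIn s u ∧ G.IsSimplicialIn s v

section boundary

variable {s X : Set V} {u : V}

theorem boundary_subset : G.boundary s X ⊆ s :=
  fun _ hv => hv.1.1

theorem neighborSet_inter_subset_union_boundary (hu : u ∈ X) :
    G.neighborSet u ∩ s ⊆ X ∪ G.boundary s X := by
  rintro v ⟨huv, hv⟩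
  by_cases hvX : v ∈ X
  · exact .inl hvX
  · exact .inr ⟨⟨hv, hvX⟩, u, hu, huv.symm⟩

theorem IsSimplicialIn.of_union_boundary (hu : u ∈ X)
    (h : G.IsSimplicialIn (X ∪ G.boundary s X) u) : G.IsSimplicialIn s u :=
  IsClique.subset (Set.subset_inter Set.inter_subset_left
    (neighborSet_inter_subset_union_boundary hu)) h

theorem exists_isSimplicialIn_of_isClique_boundary (hX : X.Nonempty)
    (hS : G.IsClique (G.boundary s X))
    (h : G.IsClique (X ∪ G.boundary s X) ∨ G.HasSimplicialPair (X ∪ G.boundary s X)) :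
    ∃ u ∈ X, G.IsSimplicialIn s u := by
  rcases h with h | ⟨u, hu, v, hv, huv, hnadj, hsu, hsv⟩
  · obtain ⟨u, hu⟩ := hX
    exact ⟨u, hu, IsClique.subset (neighborSet_inter_subset_union_boundary hu) h⟩
  · by_cases huX : u ∈ X
    · exact ⟨u, huX, hsu.of_union_boundary huX⟩
    by_cases hvX : v ∈ X
    · exact ⟨v, hvX, hsv.of_union_boundary hvX⟩
    exact (hnadj (hS (hu.resolve_left huX) (hv.resolve_left hvX) huv)).elim

theorem boundary_sdiff_union_boundary_subset :
    G.boundary s (s \ (X ∪ G.boundary s X)) ⊆ G.boundary s X := by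
  rintro v ⟨⟨hv, hvR⟩, r, ⟨hr, hrX⟩, hvr⟩
  have hvX : v ∉ X := fun hvX =>
    hrX (.inr ⟨⟨hr, fun h => hrX (.inl h)⟩, v, hvX, hvr.symm⟩)
  exact by_contra fun hvS => hvR ⟨hv, fun h => h.elim hvX hvS⟩

theorem hasSimplicialPair_of_isClique_boundary (hXs : X ⊆ s) (hX : X.Nonempty)
    (hR : (s \ (X ∪ G.boundary s X)).Nonempty) (hS : G.IsClique (G.boundary s X))
    (ih : ∀ t ⊂ s, G.IsClique t ∨ G.HasSimplicialPair t) : G.HasSimplicialPair s := by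
  set R := s \ (X ∪ G.boundary s X)
  have hXR : X ∪ G.boundary s X ⊂ s :=
    (Set.ssubset_iff_of_subset (Set.union_subset hXs boundary_subset)).mpr hR
  have hRX : R ∪ G.boundary s R ⊂ s := by
    obtain ⟨x, hx⟩ := hX
    refine (Set.ssubset_iff_of_subset (Set.union_subset Set.sdiff_subset boundary_subset)).mpr
      ⟨x, hXs hx, fun h => h.elim (fun h => h.2 (.inl hx)) fun h => ?_⟩
    exact (boundary_sdiff_union_boundary_subset h).1.2 hx
  obtain ⟨u, huX, hu⟩ := exists_isSimplicialIn_of_isClique_boundary hX hS (ih _ hXR)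
  obtain ⟨v, hvR, hv⟩ := exists_isSimplicialIn_of_isClique_boundary hR
    (hS.subset boundary_sdiff_union_boundary_subset) (ih _ hRX)
  refine ⟨u, hXs huX, v, hvR.1, ?_, fun huv => hvR.2 ?_, hu, hv⟩
  · rintro rfl
    exact hvR.2 (.inl huX)
  · exact .inr ⟨⟨hvR.1, fun h => hvR.2 (.inl h)⟩, u, huX, huv.symm⟩

end boundary

theorem IsChordal.isClique_or_hasSimplicialPair [Finite V] (hG : G.IsChordal) (s : Set V) :
    G.IsClique s ∨ G.HasSimplicialPair s := by
  induction s using WellFoundedLT.induction with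
  | _ s ih =>
  by_cases hs : G.IsClique s
  · exact .inl hs
  obtain ⟨a, ha, b, hb, hab, hnab⟩ : ∃ a ∈ s, ∃ b ∈ s, a ≠ b ∧ ¬ G.Adj a b := by
    simpa only [ne_eq, IsClique, Set.Pairwise, not_forall, Classical.not_imp, exists_prop]
      using hs
  set t := {z ∈ s | z ≠ a ∧ ¬ G.Adj a z}
  set C := G.componentIn t b
  have hCt : C ⊆ t := componentIn_subset
  have hbdry : G.boundary s C ⊆ {x | G.Adj a x ∧ ∃ c ∈ C, G.Adj x c} := by
    rintro v ⟨⟨hv, hvC⟩, c, hc, hvc⟩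
    refine ⟨by_contra fun hav => hvC (mem_componentIn_of_adj hc ⟨hv, ?_, hav⟩ hvc.symm),
      c, hc, hvc⟩
    rintro rfl
    exact (hCt hc).2.2 hvc
  refine .inr (hasSimplicialPair_of_isClique_boundary (hCt.trans (Set.sep_subset _ _))
    ⟨b, mem_componentIn_self ⟨hb, hab.symm, hnab⟩⟩ ⟨a, ha, ?_⟩
    ((hG.isClique_setOf_adj_componentIn fun _ hz => hz.2).subset hbdry) ih)
  rintro (haC | haC)
  · exact (hCt haC).2.1 rfl
  · exact (hbdry haC).1.ne rfl

end SimpleGraph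

theorem chordal_exists_simplicial {V : Type*} [Fintype V] [Nonempty V]
    (G : SimpleGraph V) (hG : G.IsChordal) :
    ∃ x : V, G.IsClique (G.neighborSet x) := by
  obtain h | ⟨u, -, -, -, -, -, hu, -⟩ := hG.isClique_or_hasSimplicialPair Set.univ
  · obtain ⟨x⟩ := ‹Nonempty V›
    exact ⟨x, h.subset (Set.subset_univ _)⟩
  · exact ⟨u, by rwa [SimpleGraph.IsSimplicialIn, Set.inter_univ] at hu⟩
end

section
/- For any graph G, the graph T(G) obtained from the subdivision of G by making the set of original vertices a clique is chordal. -/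
/-- `TGraph G`: the subdivision of `G` with all edges added between original vertices. -/
def TGraph {V : Type*} (G : SimpleGraph V) : SimpleGraph (V ⊕ G.edgeSet) :=
  SimpleGraph.fromRel fun a b =>
    match a, b with
    | Sum.inl u, Sum.inl v => u ≠ v
    | Sum.inl u, Sum.inr e => u ∈ (e : Sym2 V)
    | Sum.inr e, Sum.inl u => u ∈ (e : Sym2 V)
    | Sum.inr _, Sum.inr _ => False

namespace SimpleGraph.Walk.IsCycle

variable {V : Type*} {G : SimpleGraph V} {u : V} {c : G.Walk u u}

lemma not_toSubgraph_adj_snd_penultimate (hc : c.IsCycle) (h4 : 4 ≤ c.length) :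
    ¬ c.toSubgraph.Adj c.snd c.penultimate := by
  intro hadj
  have hnbr : c.penultimate ∈ c.toSubgraph.neighborSet (c.getVert 1) := hadj
  rw [hc.neighborSet_toSubgraph_internal one_ne_zero (by omega)] at hnbr
  rcases hnbr with hstart | hsecond
  · rw [penultimate, Nat.sub_self, getVert_zero, hc.getVert_endpoint_iff (by omega)] at hstart
    omega
  · have := hc.getVert_injOn (by simp; omega) (by simp; omega) hsecond
    omega

lemma exists_toSubgraph_neighbors_not_adj (hc : c.IsCycle) (h4 : 4 ≤ c.length) {x : V}
    (hx : x ∈ c.support) :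
    ∃ y z, c.toSubgraph.Adj x y ∧ c.toSubgraph.Adj x z ∧ y ≠ z ∧ ¬ c.toSubgraph.Adj y z := by
  classical
  have hrot : (c.rotate x hx).IsCycle := hc.rotate hx
  have hnil := hrot.not_nil
  refine ⟨(c.rotate x hx).snd, (c.rotate x hx).penultimate, ?_, ?_, hrot.snd_ne_penultimate, ?_⟩
  · simpa using (c.rotate x hx).toSubgraph_adj_snd hnil
  · simpa using ((c.rotate x hx).toSubgraph_adj_penultimate hnil).symm
  · simpa using hrot.not_toSubgraph_adj_snd_penultimate (by simpa using h4)

end SimpleGraph.Walk.IsCycle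

namespace TGraph

variable {V : Type*} {G : SimpleGraph V}

lemma adj_of_isLeft {a b : V ⊕ G.edgeSet} (hab : a ≠ b) (ha : a.isLeft) (hb : b.isLeft) :
    (TGraph G).Adj a b := by
  obtain ⟨u, rfl⟩ := Sum.isLeft_iff.mp ha
  obtain ⟨w, rfl⟩ := Sum.isLeft_iff.mp hb
  rw [TGraph, SimpleGraph.fromRel_adj]
  exact ⟨hab, Or.inl (by simpa using hab)⟩

lemma isLeft_of_adj_inr {e : G.edgeSet} {a : V ⊕ G.edgeSet} (h : (TGraph G).Adj (.inr e) a) :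
    a.isLeft := by
  cases a with
  | inl => rfl
  | inr => simp [TGraph] at h

end TGraph

/-- For any graph `G`, the graph `T(G)` is chordal. -/
theorem tGraph_isChordal {V : Type*} (G : SimpleGraph V) : (TGraph G).IsChordal := by
  intro v w hw hlen
  obtain ⟨x, hx, hnbr⟩ : ∃ x ∈ w.support, ∀ y, w.toSubgraph.Adj x y → y.isLeft := by
    by_cases hsub : ∃ e, Sum.inr e ∈ w.support
    · obtain ⟨e, he⟩ := hsub
      exact ⟨_, he, fun y hy => TGraph.isLeft_of_adj_inr hy.adj_sub⟩
    · refine ⟨v, w.start_mem_support, fun y hy => ?_⟩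
      cases y with
      | inl => rfl
      | inr e => exact absurd ⟨e, SimpleGraph.Walk.mem_support_of_adj_toSubgraph hy.symm⟩ hsub
  obtain ⟨y, z, hy, hz, hyz, hnadj⟩ := hw.exists_toSubgraph_neighbors_not_adj hlen hx
  exact ⟨y, z, SimpleGraph.Walk.mem_support_of_adj_toSubgraph hy.symm,
    SimpleGraph.Walk.mem_support_of_adj_toSubgraph hz.symm, TGraph.adj_of_isLeft hyz (hnbr y hy) (hnbr z hz), hnadj⟩
end
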